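/- (Noether's theorem for generalized symmetries.) Let L : J → ℝ be a smooth Lagrangian and let X^i : J → ℝ be smooth components of a generalized symmetry: there are smooth F^α : J → ℝ (1 ≤ α ≤ k) such that for every solution φ : ℝ^k → ℝ^n of the Euler–Lagrange equations of L and every x ∈ ℝ^k, [X^i ∂L/∂q^i + D_α X^i · ∂L/∂v^i_α](at j¹φ(x)) = ∑_α [D_α F^α](at j¹φ(x)), where for a smooth H : J → ℝ the operator D_α along j¹φ is D_α H = ∂H/∂x^α + ∂φ^j/∂x^α · ∂H/∂q^j + ∂²φ^j/∂x^α∂x^β · ∂H/∂v^j_β, all evaluated at j¹φ(x). Then the functions G^α = F^α − X^i ∂L/∂v^i_α define a conservation law for the Euler–Lagrange equations of L. -/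

import Mathlib

open Function

noncomputable section

/-- The first jet space `J = ℝᵏ × ℝⁿ × (Fin n → Fin k → ℝ)`,
with coordinates `(xᵅ, qⁱ, vⁱ_α)`. -/
abbrev Jet (k n : ℕ) : Type :=
  (Fin k → ℝ) × (Fin n → ℝ) × (Fin n → Fin k → ℝ)

variable {k n : ℕ}

/-- Partial derivative `∂F/∂xᵅ` of a function on the jet space. -/
noncomputable def pdX (F : Jet k n → ℝ) (α : Fin k) (z : Jet k n) : ℝ :=
  deriv (fun t => F (Function.update z.1 α t, z.2.1, z.2.2)) (z.1 α)

/-- Partial derivative `∂F/∂qⁱ` of a function on the jet space. -/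
noncomputable def pdQ (F : Jet k n → ℝ) (i : Fin n) (z : Jet k n) : ℝ :=
  deriv (fun t => F (z.1, Function.update z.2.1 i t, z.2.2)) (z.2.1 i)

/-- Partial derivative `∂F/∂vⁱ_α` of a function on the jet space. -/
noncomputable def pdV (F : Jet k n → ℝ) (i : Fin n) (α : Fin k) (z : Jet k n) : ℝ :=
  deriv (fun t => F (z.1, z.2.1,
    Function.update z.2.2 i (Function.update (z.2.2 i) α t))) (z.2.2 i α)

/-- Partial derivative `∂φⁱ/∂xᵅ` of a map `φ : ℝᵏ → ℝⁿ`. -/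
noncomputable def pD (φ : (Fin k → ℝ) → (Fin n → ℝ)) (i : Fin n) (α : Fin k)
    (x : Fin k → ℝ) : ℝ :=
  deriv (fun t => φ (Function.update x α t) i) (x α)

/-- Second partial derivative `∂²φⁱ/∂xᵅ∂xᵝ` of a map `φ : ℝᵏ → ℝⁿ`. -/
noncomputable def pD2 (φ : (Fin k → ℝ) → (Fin n → ℝ)) (i : Fin n) (α β : Fin k)
    (x : Fin k → ℝ) : ℝ :=
  deriv (fun t => pD φ i β (Function.update x α t)) (x α)

/-- First prolongation `j¹φ : ℝᵏ → J` of `φ : ℝᵏ → ℝⁿ`. -/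
noncomputable def j1 (φ : (Fin k → ℝ) → (Fin n → ℝ)) (x : Fin k → ℝ) : Jet k n :=
  (x, φ x, fun i α => pD φ i α x)

/-- `φ` is a smooth solution of the Euler–Lagrange equations of the Lagrangian `L`:
`∑_α ∂/∂xᵅ[(∂L/∂vⁱ_α) ∘ j¹φ] = (∂L/∂qⁱ) ∘ j¹φ` for all `i`. -/
def IsELSolution (L : Jet k n → ℝ) (φ : (Fin k → ℝ) → (Fin n → ℝ)) : Prop :=
  ContDiff ℝ (⊤ : ℕ∞) φ ∧
  ∀ (i : Fin n) (x : Fin k → ℝ),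
    (∑ α : Fin k, deriv (fun t => pdV L i α (j1 φ (Function.update x α t))) (x α))
      = pdQ L i (j1 φ x)

/-- `G = (G¹, …, Gᵏ)` is a conservation law for the Euler–Lagrange equations of `L`:
`∑_α ∂/∂xᵅ(Gᵅ ∘ j¹φ) = 0` for every solution `φ`. -/
def IsConservationLaw (L : Jet k n → ℝ) (G : Fin k → Jet k n → ℝ) : Prop :=
  ∀ φ : (Fin k → ℝ) → (Fin n → ℝ), IsELSolution L φ →
    ∀ x : Fin k → ℝ,
      (∑ α : Fin k, deriv (fun t => G α (j1 φ (Function.update x α t))) (x α)) = 0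

/-- The total-derivative operator `D_α` along `j¹φ`:
`D_α H = ∂H/∂xᵅ + ∂φʲ/∂xᵅ ∂H/∂qʲ + ∂²φʲ/∂xᵅ∂xᵝ ∂H/∂vʲ_β`, all at `j¹φ(x)`. -/
noncomputable def Dalong (φ : (Fin k → ℝ) → (Fin n → ℝ)) (x : Fin k → ℝ)
    (α : Fin k) (H : Jet k n → ℝ) : ℝ :=
  pdX H α (j1 φ x) + (∑ j : Fin n, pD φ j α x * pdQ H j (j1 φ x))
    + ∑ j : Fin n, ∑ β : Fin k, pD2 φ j α β x * pdV H j β (j1 φ x)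

/-!
Along the prolongation `j¹φ`, the total derivative `D_α H` is the `xᵅ`-derivative of `H ∘ j¹φ`
(chain rule through `t ↦ j¹φ (update x α t)`). Hence the divergence of `Gᵅ ∘ j¹φ` is
`D_α Fᵅ - D_α Xⁱ · ∂L/∂vⁱ_α - Xⁱ · D_α (∂L/∂vⁱ_α)`. On a solution the Euler–Lagrange equations turn
the last term into `Xⁱ · ∂L/∂qⁱ`, and the symmetry condition says that the result vanishes.
-/

section JetCalculus

lemma deriv_comp_eq_fderiv_apply {E : Type*} [NormedAddCommGroup E] [NormedSpace ℝ E]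
    {H : E → ℝ} {c : ℝ → E} {t : ℝ} {v z : E} (hz : c t = z)
    (hH : DifferentiableAt ℝ H z) (hc : HasDerivAt c v t) :
    deriv (fun s => H (c s)) t = fderiv ℝ H z v := by
  subst hz
  exact (hH.hasFDerivAt.comp_hasDerivAt t hc).deriv

lemma hasDerivAt_update_update {ι κ : Type*} [Fintype ι] [Fintype κ] [DecidableEq ι]
    [DecidableEq κ] (m : ι → κ → ℝ) (i : ι) (α : κ) (t : ℝ) :
    HasDerivAt (fun s => update m i (update (m i) α s)) (Pi.single i (Pi.single α 1)) t := by
  refine ((hasFDerivAt_update (i := i) m _).comp_hasDerivAt t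
    (hasDerivAt_update (m i) α t)).congr_deriv ?_
  ext j β
  rcases eq_or_ne j i with rfl | hj <;> simp [*]

lemma pdX_eq_fderiv {H : Jet k n → ℝ} {z : Jet k n} (hH : DifferentiableAt ℝ H z)
    (α : Fin k) : pdX H α z = fderiv ℝ H z (Pi.single α 1, 0, 0) :=
  deriv_comp_eq_fderiv_apply (by simp) hH
    ((hasDerivAt_update _ _ _).prodMk (hasDerivAt_const _ _))

lemma pdQ_eq_fderiv {H : Jet k n → ℝ} {z : Jet k n} (hH : DifferentiableAt ℝ H z)
    (i : Fin n) : pdQ H i z = fderiv ℝ H z (0, Pi.single i 1, 0) :=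
  deriv_comp_eq_fderiv_apply (by simp) hH
    ((hasDerivAt_const _ _).prodMk ((hasDerivAt_update _ _ _).prodMk (hasDerivAt_const _ _)))

lemma pdV_eq_fderiv {H : Jet k n → ℝ} {z : Jet k n} (hH : DifferentiableAt ℝ H z)
    (i : Fin n) (α : Fin k) : pdV H i α z = fderiv ℝ H z (0, 0, Pi.single i (Pi.single α 1)) :=
  deriv_comp_eq_fderiv_apply (by simp) hH
    ((hasDerivAt_const _ _).prodMk ((hasDerivAt_const _ _).prodMk
      (hasDerivAt_update_update _ _ _ _)))

lemma ContinuousLinearMap.apply_jet_eq_sum (f : Jet k n →L[ℝ] ℝ) (w : Jet k n) :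
    f w = ∑ β, w.1 β * f (Pi.single β 1, 0, 0) + ∑ i, w.2.1 i * f (0, Pi.single i 1, 0)
      + ∑ i, ∑ β, w.2.2 i β * f (0, 0, Pi.single i (Pi.single β 1)) := by
  have hw : w = ∑ β, w.1 β • ((Pi.single β 1, 0, 0) : Jet k n)
      + ∑ i, w.2.1 i • ((0, Pi.single i 1, 0) : Jet k n)
      + ∑ i, ∑ β, w.2.2 i β • ((0, 0, Pi.single i (Pi.single β 1)) : Jet k n) := by
    refine Prod.ext ?_ (Prod.ext ?_ ?_) <;> ext <;>
      simp [Prod.fst_sum, Prod.snd_sum, Finset.sum_apply, Pi.single_apply]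
  conv_lhs => rw [hw]
  simp only [map_add, map_sum, map_smul, smul_eq_mul]

lemma fderiv_apply_eq_sum_pd {H : Jet k n → ℝ} {z : Jet k n} (hH : DifferentiableAt ℝ H z)
    (w : Jet k n) :
    fderiv ℝ H z w = ∑ β, w.1 β * pdX H β z + ∑ i, w.2.1 i * pdQ H i z
      + ∑ i, ∑ β, w.2.2 i β * pdV H i β z := by
  simp only [pdX_eq_fderiv hH, pdQ_eq_fderiv hH, pdV_eq_fderiv hH]
  exact (fderiv ℝ H z).apply_jet_eq_sum w

lemma pD_eq_fderiv {φ : (Fin k → ℝ) → (Fin n → ℝ)} {x : Fin k → ℝ}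
    (hφ : DifferentiableAt ℝ φ x) (i : Fin n) (α : Fin k) :
    pD φ i α x = fderiv ℝ φ x (Pi.single α 1) i := by
  have h := hφ.hasFDerivAt.comp_hasDerivAt_of_eq (x α) (hasDerivAt_update x α (x α)) (by simp)
  exact (hasDerivAt_pi.1 h i).deriv

lemma contDiff_pD {m : WithTop ℕ∞} {φ : (Fin k → ℝ) → (Fin n → ℝ)}
    (hφ : ContDiff ℝ (m + 1) φ) (i : Fin n) (α : Fin k) : ContDiff ℝ m (pD φ i α) := by
  rw [show pD φ i α = fun y => fderiv ℝ φ y (Pi.single α 1) i from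
    funext fun y => pD_eq_fderiv (hφ.differentiable (by simp) y) i α]
  exact contDiff_pi.1 ((hφ.fderiv_right le_rfl).clm_apply contDiff_const) i

lemma contDiff_pdV {m : WithTop ℕ∞} {L : Jet k n → ℝ} (hL : ContDiff ℝ (m + 1) L)
    (i : Fin n) (α : Fin k) : ContDiff ℝ m (pdV L i α) := by
  rw [show pdV L i α = fun z => fderiv ℝ L z (0, 0, Pi.single i (Pi.single α 1)) from
    funext fun z => pdV_eq_fderiv (hL.differentiable (by simp) z) i α]
  exact (hL.fderiv_right le_rfl).clm_apply contDiff_const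

lemma hasDerivAt_j1_update {φ : (Fin k → ℝ) → (Fin n → ℝ)} (hφ : ContDiff ℝ 2 φ)
    (x : Fin k → ℝ) (α : Fin k) :
    HasDerivAt (fun t => j1 φ (update x α t))
      (Pi.single α 1, fun i => pD φ i α x, fun i β => pD2 φ i α β x) (x α) := by
  have hcurve := (hasDerivAt_update x α (x α)).differentiableAt
  refine (hasDerivAt_update x α (x α)).prodMk ((hasDerivAt_pi.2 fun i => ?_).prodMk
    (hasDerivAt_pi.2 fun i => hasDerivAt_pi.2 fun β => ?_))
  · exact (differentiableAt_pi.1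
      ((hφ.differentiable two_ne_zero _).comp _ hcurve) i).hasDerivAt
  · exact (((contDiff_pD (m := 1) hφ i β).differentiable one_ne_zero _).comp _
      hcurve).hasDerivAt

lemma hasDerivAt_comp_j1 {H : Jet k n → ℝ} {φ : (Fin k → ℝ) → (Fin n → ℝ)}
    {x : Fin k → ℝ} (hH : DifferentiableAt ℝ H (j1 φ x)) (hφ : ContDiff ℝ 2 φ) (α : Fin k) :
    HasDerivAt (fun t => H (j1 φ (update x α t))) (Dalong φ x α H) (x α) := by
  refine (hH.hasFDerivAt.comp_hasDerivAt_of_eq (x α) (hasDerivAt_j1_update hφ x α)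
    (by simp)).congr_deriv ?_
  simp [fderiv_apply_eq_sum_pd hH, Dalong, Pi.single_apply]

end JetCalculus

section Noether

variable {L : Jet k n → ℝ} {φ : (Fin k → ℝ) → (Fin n → ℝ)}

lemma IsELSolution.contDiff_two (hφ : IsELSolution L φ) : ContDiff ℝ 2 φ :=
  hφ.1.of_le (WithTop.coe_le_coe.2 le_top)

lemma IsELSolution.sum_Dalong_pdV (hL : ContDiff ℝ 2 L) (hφ : IsELSolution L φ)
    (i : Fin n) (x : Fin k → ℝ) :
    ∑ α, Dalong φ x α (pdV L i α) = pdQ L i (j1 φ x) := by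
  rw [← hφ.2 i x]
  exact Finset.sum_congr rfl fun α _ => (hasDerivAt_comp_j1
    ((contDiff_pdV (m := 1) hL i α).differentiable one_ne_zero _) hφ.contDiff_two α).deriv.symm

lemma hasDerivAt_comp_j1_mul {H₁ H₂ : Jet k n → ℝ} {x : Fin k → ℝ}
    (h₁ : DifferentiableAt ℝ H₁ (j1 φ x)) (h₂ : DifferentiableAt ℝ H₂ (j1 φ x))
    (hφ : ContDiff ℝ 2 φ) (α : Fin k) :
    HasDerivAt (fun t => H₁ (j1 φ (update x α t)) * H₂ (j1 φ (update x α t)))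
      (Dalong φ x α H₁ * H₂ (j1 φ x) + H₁ (j1 φ x) * Dalong φ x α H₂) (x α) := by
  simpa using (hasDerivAt_comp_j1 h₁ hφ α).fun_mul (hasDerivAt_comp_j1 h₂ hφ α)

lemma sum_deriv_sub_sum_mul_pdV (hL : ContDiff ℝ 2 L) (hφ : ContDiff ℝ 2 φ)
    {X : Fin n → Jet k n → ℝ} {F : Fin k → Jet k n → ℝ} {x : Fin k → ℝ}
    (hX : ∀ i, DifferentiableAt ℝ (X i) (j1 φ x)) (hF : ∀ α, DifferentiableAt ℝ (F α) (j1 φ x)) :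
    ∑ α, deriv (fun t => F α (j1 φ (update x α t))
        - ∑ i, X i (j1 φ (update x α t)) * pdV L i α (j1 φ (update x α t))) (x α)
      = ∑ α, Dalong φ x α (F α) - ∑ i, ∑ α, Dalong φ x α (X i) * pdV L i α (j1 φ x)
        - ∑ i, X i (j1 φ x) * ∑ α, Dalong φ x α (pdV L i α) := by
  have hV : ∀ i α, DifferentiableAt ℝ (pdV L i α) (j1 φ x) := fun i α =>
    (contDiff_pdV (m := 1) hL i α).differentiable one_ne_zero _
  have hderiv : ∀ α, HasDerivAt (fun t => F α (j1 φ (update x α t))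
        - ∑ i, X i (j1 φ (update x α t)) * pdV L i α (j1 φ (update x α t)))
      (Dalong φ x α (F α) - ∑ i, (Dalong φ x α (X i) * pdV L i α (j1 φ x)
        + X i (j1 φ x) * Dalong φ x α (pdV L i α))) (x α) := fun α =>
    (hasDerivAt_comp_j1 (hF α) hφ α).sub
      (HasDerivAt.fun_sum fun i _ => hasDerivAt_comp_j1_mul (hX i) (hV i α) hφ α)
  simp only [fun α => (hderiv α).deriv, Finset.sum_sub_distrib, Finset.sum_add_distrib,
    Finset.mul_sum]
  rw [Finset.sum_comm (f := fun α i => Dalong φ x α (X i) * _),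
    Finset.sum_comm (f := fun α i => X i _ * _)]
  ring

end Noether

theorem statement9_general (k n : ℕ)
    (L : Jet k n → ℝ) (hL : ContDiff ℝ (⊤ : ℕ∞) L)
    (X : Fin n → Jet k n → ℝ) (hX : ∀ i, ContDiff ℝ (⊤ : ℕ∞) (X i))
    (F : Fin k → Jet k n → ℝ) (hF : ∀ α, ContDiff ℝ (⊤ : ℕ∞) (F α))
    (hsym : ∀ φ : (Fin k → ℝ) → (Fin n → ℝ), IsELSolution L φ →
      ∀ x : Fin k → ℝ,
        (∑ i : Fin n, X i (j1 φ x) * pdQ L i (j1 φ x))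
        + (∑ i : Fin n, ∑ α : Fin k, Dalong φ x α (X i) * pdV L i α (j1 φ x))
        = ∑ α : Fin k, Dalong φ x α (F α)) :
    IsConservationLaw L
      (fun α z => F α z - ∑ i : Fin n, X i z * pdV L i α z) := by
  intro φ hφ x
  have hL₂ : ContDiff ℝ 2 L := hL.of_le (WithTop.coe_le_coe.2 le_top)
  rw [sum_deriv_sub_sum_mul_pdV hL₂ hφ.contDiff_two
    (fun i => (hX i).differentiable (by simp) _) (fun α => (hF α).differentiable (by simp) _)]
  simp only [hφ.sum_Dalong_pdV hL₂, ← hsym φ hφ x]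
  ring

/-- Noether's theorem for generalized symmetries: if `X` is a
generalized symmetry of `L`, i.e. `d_{X⁽¹⁾}L = d_{T⁽¹⁾_α}Fᵅ` along second jets of
solutions, then `Gᵅ = Fᵅ − Xⁱ ∂L/∂vⁱ_α` defines a conservation law. -/
theorem statement9 (k n : ℕ) (hk : 1 ≤ k) (hn : 1 ≤ n)
    (L : Jet k n → ℝ) (hL : ContDiff ℝ (⊤ : ℕ∞) L)
    (X : Fin n → Jet k n → ℝ) (hX : ∀ i, ContDiff ℝ (⊤ : ℕ∞) (X i))
    (F : Fin k → Jet k n → ℝ) (hF : ∀ α, ContDiff ℝ (⊤ : ℕ∞) (F α))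
    (hsym : ∀ φ : (Fin k → ℝ) → (Fin n → ℝ), IsELSolution L φ →
      ∀ x : Fin k → ℝ,
        (∑ i : Fin n, X i (j1 φ x) * pdQ L i (j1 φ x))
        + (∑ i : Fin n, ∑ α : Fin k, Dalong φ x α (X i) * pdV L i α (j1 φ x))
        = ∑ α : Fin k, Dalong φ x α (F α)) :
    IsConservationLaw L
      (fun α z => F α z - ∑ i : Fin n, X i z * pdV L i α z) :=
  statement9_general k n L hL X hX F hF hsym
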